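/- Let 0 < α < 2 with α ≠ 1, and let −1 < p < α. Then γ(α,p) = [1/(α(α−1))]·{(p+1−α)(p+2−α)·B(p+1, 2−α) − (1−α)(2−α)·B(1, 2−α) + p(p−1)·B(α−p, 2−α)}, where γ(α,p) = ∫_0^1 (t^p − 1)(1 − t^{α−p−1}) / (1 − t)^{1+α} dt and B is the Euler beta function. -/

import Mathlib

/-!
Write the integrand as `N(t) (1 - t)^(-1-α)` with `N(t) = (t^p - 1)(1 - t^(α-p-1))`. Both factors
of `N` vanish at `t = 1`, so `N(t) = O((1 - t)^2)` there and the integral converges. The function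
`G(x) = x N(x) (1 - x)^(-α) / α + Q(x) (1 - x)^(1-α) / (α (α - 1))`, where
`Q(x) = (α-p-1) x^(p+1) + p x^(α-p) - (α-1) x`, satisfies `G' = N(x) (1 - x)^(-1-α) - r(x)`
with `r` a linear combination of the beta densities `x^p (1-x)^(1-α)`, `(1-x)^(1-α)` and
`x^(α-p-1) (1-x)^(1-α)`. Since `G` tends to `0` at both endpoints (at `1` because
`N = O((1 - x)^2)` and `Q(1) = 0`), the integral equals `∫ r`, the stated combination of beta
values.
-/

open MeasureTheory Real Set

/-- The Euler beta function. -/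
noncomputable def eulerBeta (a b : ℝ) : ℝ := Real.Gamma a * Real.Gamma b / Real.Gamma (a + b)

open Filter Topology

noncomputable def betaKernel (a b t : ℝ) : ℝ := t ^ (a - 1) * (1 - t) ^ (b - 1)

lemma ofReal_betaKernel {t : ℝ} (ht : t ∈ Icc (0 : ℝ) 1) (a b : ℝ) :
    (betaKernel a b t : ℂ) = (t : ℂ) ^ ((a : ℂ) - 1) * (1 - (t : ℂ)) ^ ((b : ℂ) - 1) := by
  push_cast [betaKernel, Complex.ofReal_cpow ht.1, Complex.ofReal_cpow (sub_nonneg.2 ht.2)]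
  rfl

lemma intervalIntegrable_betaKernel {a b : ℝ} (ha : 0 < a) (hb : 0 < b) :
    IntervalIntegrable (betaKernel a b) volume 0 1 := by
  refine (Complex.betaIntegral_convergent (u := a) (v := b) (by simpa) (by simpa)).norm.congr ?_
  intro t ht
  rw [uIoc_of_le zero_le_one] at ht
  dsimp only
  rw [← ofReal_betaKernel (Ioc_subset_Icc_self ht), Complex.norm_real, norm_of_nonneg]
  exact mul_nonneg (rpow_nonneg ht.1.le _) (rpow_nonneg (sub_nonneg.2 ht.2) _)

lemma integral_betaKernel {a b : ℝ} (ha : 0 < a) (hb : 0 < b) :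
    ∫ t in (0 : ℝ)..1, betaKernel a b t = eulerBeta a b := by
  have h := Complex.betaIntegral_eq_Gamma_mul_div a b (by simpa) (by simpa)
  rw [Complex.betaIntegral, intervalIntegral.integral_congr fun t ht => (ofReal_betaKernel
      (by rwa [uIcc_of_le zero_le_one] at ht) a b).symm, intervalIntegral.integral_ofReal,
    ← Complex.ofReal_add, Complex.Gamma_ofReal, Complex.Gamma_ofReal, Complex.Gamma_ofReal] at h
  exact_mod_cast h

lemma exists_abs_le_mul_sub_of_contDiffOn {f : ℝ → ℝ} {a b : ℝ} (hab : a ≤ b)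
    (hf : ContDiffOn ℝ 1 f (Icc a b)) (hfb : f b = 0) :
    ∃ C, ∀ x ∈ Icc a b, |f x| ≤ C * (b - x) := by
  obtain ⟨K, hK⟩ := hf.exists_lipschitzOnWith one_ne_zero (convex_Icc a b) isCompact_Icc
  refine ⟨K, fun x hx => ?_⟩
  have h := hK.dist_le_mul x hx b (right_mem_Icc.2 hab)
  rwa [hfb, dist_zero_right, Real.norm_eq_abs, Real.dist_eq, abs_sub_comm,
    abs_of_nonneg (sub_nonneg.2 hx.2)] at h

lemma contDiffOn_rpow_const_Icc (s : ℝ) {c d : ℝ} (hc : 0 < c) :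
    ContDiffOn ℝ 1 (fun t : ℝ => t ^ s) (Icc c d) := fun _ ht =>
  (contDiffAt_rpow_const_of_ne (hc.trans_le ht.1).ne').contDiffWithinAt

lemma exists_abs_rpow_sub_one_le (s : ℝ) {c : ℝ} (hc : 0 < c) (hc1 : c ≤ 1) :
    ∃ C, ∀ t ∈ Icc c 1, |t ^ s - 1| ≤ C * (1 - t) :=
  exists_abs_le_mul_sub_of_contDiffOn hc1 ((contDiffOn_rpow_const_Icc s hc).sub contDiffOn_const)
    (by simp)

noncomputable def gammaNumerator (α p t : ℝ) : ℝ := (t ^ p - 1) * (1 - t ^ (α - p - 1))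

noncomputable def gammaIntegrand (α p t : ℝ) : ℝ := gammaNumerator α p t / (1 - t) ^ (1 + α)

lemma mul_gammaNumerator {α p x : ℝ} (hx : 0 < x) :
    x * gammaNumerator α p x = x ^ (p + 1) + x ^ (α - p) - x ^ α - x := by
  have e1 : x ^ (p + 1) = x ^ p * x := rpow_add_one hx.ne' p
  have e2 : x ^ (α - p) = x ^ (α - p - 1) * x := by rw [← rpow_add_one hx.ne']; ring_nf
  have e3 : x ^ α = x ^ p * x ^ (α - p - 1) * x := by
    rw [← rpow_add hx, ← rpow_add_one hx.ne']; ring_nf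
  rw [gammaNumerator, e1, e2, e3]
  ring

lemma abs_gammaNumerator_le {α p t : ℝ} (ht : 0 < t) :
    |gammaNumerator α p t| ≤ t ^ p + t ^ (α - p - 1) + t ^ (α - 1) + 1 := by
  have hu := rpow_nonneg ht.le p
  have hv := rpow_nonneg ht.le (α - p - 1)
  have huv : t ^ p * t ^ (α - p - 1) = t ^ (α - 1) := by rw [← rpow_add ht]; ring_nf
  calc |gammaNumerator α p t| = |t ^ p - 1| * |1 - t ^ (α - p - 1)| := abs_mul _ _
    _ ≤ (t ^ p + 1) * (1 + t ^ (α - p - 1)) := by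
        gcongr
        · exact (abs_sub _ _).trans (by rw [abs_one, abs_of_nonneg hu])
        · exact (abs_sub _ _).trans (by rw [abs_one, abs_of_nonneg hv])
    _ = t ^ p + t ^ (α - p - 1) + t ^ (α - 1) + 1 := by rw [← huv]; ring

lemma exists_abs_gammaNumerator_le (α p : ℝ) :
    ∃ C, ∀ t ∈ Icc (1 / 2 : ℝ) 1, |gammaNumerator α p t| ≤ C * (1 - t) ^ 2 := by
  obtain ⟨C₁, hC₁⟩ := exists_abs_rpow_sub_one_le p one_half_pos one_half_lt_one.le
  obtain ⟨C₂, hC₂⟩ :=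
    exists_abs_rpow_sub_one_le (α - p - 1) one_half_pos one_half_lt_one.le
  refine ⟨C₁ * C₂, fun t ht => ?_⟩
  calc |gammaNumerator α p t| = |t ^ p - 1| * |t ^ (α - p - 1) - 1| := by
        rw [gammaNumerator, abs_mul, abs_sub_comm 1]
    _ ≤ (C₁ * (1 - t)) * (C₂ * (1 - t)) :=
        mul_le_mul (hC₁ t ht) (hC₂ t ht) (abs_nonneg _) ((abs_nonneg _).trans (hC₁ t ht))
    _ = C₁ * C₂ * (1 - t) ^ 2 := by ring

lemma integrableOn_gammaNumerator_Ioc {α p : ℝ} (hα0 : 0 < α) (hp1 : -1 < p) (hpα : p < α)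
    (c : ℝ) : IntegrableOn (gammaNumerator α p) (Ioc 0 c) := by
  have hpow {s : ℝ} (hs : -1 < s) : IntegrableOn (fun t : ℝ => t ^ s) (Ioc 0 c) :=
    (intervalIntegral.intervalIntegrable_rpow' hs).1
  refine Integrable.mono' ((((hpow hp1).add (hpow (by linarith : -1 < α - p - 1))).add
      (hpow (by linarith : -1 < α - 1))).add
        (integrableOn_const (C := (1 : ℝ)) measure_Ioc_lt_top.ne))
    (by unfold gammaNumerator; fun_prop) ?_
  refine ae_restrict_of_forall_mem measurableSet_Ioc fun t ht => ?_
  simpa only [Pi.add_apply, Real.norm_eq_abs] using abs_gammaNumerator_le ht.1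

lemma integrableOn_gammaIntegrand {α p : ℝ} (hα0 : 0 < α) (hα2 : α < 2) (hp1 : -1 < p)
    (hpα : p < α) :
    IntegrableOn (gammaIntegrand α p) (Ioo 0 1) := by
  rw [← Ioc_union_Ioo_eq_Ioo one_half_pos.le one_half_lt_one]
  refine IntegrableOn.union ?_ ?_
  · have hden : ContinuousOn (fun t : ℝ => ((1 - t) ^ (1 + α))⁻¹) (Icc 0 (1 / 2)) := by
      intro t ht
      have h1t : 0 < 1 - t := by linarith [ht.2]
      exact (((continuousAt_const.sub continuousAt_id).rpow_const (Or.inl h1t.ne')).inv₀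
        (rpow_pos_of_pos h1t _).ne').continuousWithinAt
    unfold gammaIntegrand
    simpa only [div_eq_mul_inv] using (integrableOn_gammaNumerator_Ioc hα0 hp1 hpα _)
      |>.mul_continuousOn_of_subset hden measurableSet_Ioc isCompact_Icc Ioc_subset_Icc_self
  · obtain ⟨C, hC⟩ := exists_abs_gammaNumerator_le α p
    have hdom : IntegrableOn (fun t : ℝ => C * (1 - t) ^ (1 - α)) (Ioo (1 / 2) 1) := by
      have h := (intervalIntegral.intervalIntegrable_rpow' (r := 1 - α) (by linarith)
        (a := 0) (b := 1 / 2)).comp_sub_left 1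
      rw [sub_zero, show (1 : ℝ) - 1 / 2 = 1 / 2 by norm_num] at h
      exact (h.symm.1.mono_set Ioo_subset_Ioc_self).const_mul C
    refine hdom.mono'
      (Measurable.aestronglyMeasurable (by unfold gammaIntegrand gammaNumerator; fun_prop)) ?_
    refine ae_restrict_of_forall_mem measurableSet_Ioo fun t ht => ?_
    have h1t : 0 < 1 - t := sub_pos.2 ht.2
    have hsplit : (1 - t) ^ (1 - α) = (1 - t) ^ 2 / (1 - t) ^ (1 + α) := by
      rw [← rpow_natCast, ← rpow_sub h1t]; ring_nf
    rw [gammaIntegrand, norm_div, Real.norm_eq_abs, Real.norm_of_nonneg (rpow_nonneg h1t.le _),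
      hsplit, mul_div_assoc']
    gcongr
    exact hC t (Ioo_subset_Icc_self ht)

noncomputable def gammaRemainder (α p t : ℝ) : ℝ :=
  1 / (α * (α - 1)) *
    ((p + 1 - α) * (p + 2 - α) * betaKernel (p + 1) (2 - α) t
      - (1 - α) * (2 - α) * betaKernel 1 (2 - α) t
      + p * (p - 1) * betaKernel (α - p) (2 - α) t)

lemma intervalIntegrable_gammaRemainder {α p : ℝ} (hα2 : α < 2) (hp1 : -1 < p)
    (hpα : p < α) :
    IntervalIntegrable (gammaRemainder α p) volume 0 1 := by
  have hb : (0 : ℝ) < 2 - α := by linarith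
  exact ((((intervalIntegrable_betaKernel (by linarith) hb).const_mul _).sub
    ((intervalIntegrable_betaKernel one_pos hb).const_mul _)).add
      ((intervalIntegrable_betaKernel (by linarith) hb).const_mul _)).const_mul _

lemma integral_gammaRemainder {α p : ℝ} (hα2 : α < 2) (hp1 : -1 < p) (hpα : p < α) :
    ∫ t in (0 : ℝ)..1, gammaRemainder α p t =
      1 / (α * (α - 1)) *
        ((p + 1 - α) * (p + 2 - α) * eulerBeta (p + 1) (2 - α)
          - (1 - α) * (2 - α) * eulerBeta 1 (2 - α)
          + p * (p - 1) * eulerBeta (α - p) (2 - α)) := by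
  have hb : (0 : ℝ) < 2 - α := by linarith
  have h₁ := intervalIntegrable_betaKernel (by linarith : 0 < p + 1) hb
  have h₂ := intervalIntegrable_betaKernel one_pos hb
  have h₃ := intervalIntegrable_betaKernel (by linarith : 0 < α - p) hb
  simp only [gammaRemainder]
  rw [intervalIntegral.integral_const_mul,
    intervalIntegral.integral_add ((h₁.const_mul _).sub (h₂.const_mul _)) (h₃.const_mul _),
    intervalIntegral.integral_sub (h₁.const_mul _) (h₂.const_mul _),
    intervalIntegral.integral_const_mul, intervalIntegral.integral_const_mul,
    intervalIntegral.integral_const_mul, integral_betaKernel (by linarith) hb,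
    integral_betaKernel one_pos hb, integral_betaKernel (by linarith) hb]

noncomputable def gammaPrimitive (α p x : ℝ) : ℝ :=
  (x ^ (p + 1) + x ^ (α - p) - x ^ α - x) * (1 - x) ^ (-α) / α
    + ((α - p - 1) * x ^ (p + 1) + p * x ^ (α - p) - (α - 1) * x) * (1 - x) ^ (1 - α)
      / (α * (α - 1))

lemma hasDerivAt_gammaPrimitive {α p t : ℝ} (hα0 : α ≠ 0) (hα1 : α ≠ 1)
    (ht : t ∈ Ioo (0 : ℝ) 1) :
    HasDerivAt (gammaPrimitive α p) (gammaIntegrand α p t - gammaRemainder α p t) t := by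
  have ht0 : t ≠ 0 := ht.1.ne'
  have h1t : 0 < 1 - t := sub_pos.2 ht.2
  have hpow (s : ℝ) : HasDerivAt (fun x : ℝ => x ^ s) (s * t ^ (s - 1)) t :=
    hasDerivAt_rpow_const (Or.inl ht0)
  have hpow_one_sub (s : ℝ) :
      HasDerivAt (fun x : ℝ => (1 - x) ^ s) (-1 * s * (1 - t) ^ (s - 1)) t :=
    ((hasDerivAt_id t).const_sub 1).rpow_const (Or.inl h1t.ne')
  have hA := (((hpow (p + 1)).add (hpow (α - p))).sub (hpow α)).sub (hasDerivAt_id' t)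
  have hQ := (((hpow (p + 1)).const_mul (α - p - 1)).add ((hpow (α - p)).const_mul p)).sub
    ((hasDerivAt_id' t).const_mul (α - 1))
  have hG : HasDerivAt (gammaPrimitive α p) _ t :=
    ((hA.mul (hpow_one_sub (-α))).div_const α).add
      ((hQ.mul (hpow_one_sub (1 - α))).div_const (α * (α - 1)))
  refine hG.congr_deriv ?_
  have h1t' : 1 - t ≠ 0 := h1t.ne'
  have hα1' : α - 1 ≠ 0 := sub_ne_zero.2 hα1
  have hw : (1 - t) ^ (-α - 1) ≠ 0 := (rpow_pos_of_pos h1t _).ne'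
  -- In terms of `t ^ p`, `t ^ (α - p - 1)` and `(1 - t) ^ (-α - 1)` the identity is rational.
  have e1 : t ^ (p + 1) = t ^ p * t := rpow_add_one ht0 p
  have e2 : t ^ (α - p) = t ^ (α - p - 1) * t := by rw [← rpow_add_one ht0]; ring_nf
  have e3 : t ^ (α - 1) = t ^ p * t ^ (α - p - 1) := by rw [← rpow_add ht.1]; ring_nf
  have e4 : t ^ α = t ^ p * t ^ (α - p - 1) * t := by rw [← e3, ← rpow_add_one ht0]; ring_nf
  have f1 : (1 - t) ^ (-α) = (1 - t) ^ (-α - 1) * (1 - t) := by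
    rw [← rpow_add_one h1t']; ring_nf
  have f2 : (1 - t) ^ (1 - α) = (1 - t) ^ (-α - 1) * (1 - t) * (1 - t) := by
    rw [← rpow_add_one h1t', ← rpow_add_one h1t']; ring_nf
  have f3 : (1 - t) ^ (1 + α) = ((1 - t) ^ (-α - 1))⁻¹ := by
    rw [← rpow_neg h1t.le]; ring_nf
  simp only [gammaIntegrand, gammaNumerator, gammaRemainder, betaKernel, Pi.add_apply,
    Pi.sub_apply, add_sub_cancel_right, sub_self, rpow_zero,
    show (2 : ℝ) - α - 1 = 1 - α by ring, show (1 : ℝ) - α - 1 = -α by ring]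
  rw [e1, e2, e4, e3, f2, f1, f3]
  field_simp
  ring

lemma tendsto_gammaPrimitive_zero {α p : ℝ} (hα0 : 0 < α) (hp1 : -1 < p) (hpα : p < α) :
    Tendsto (gammaPrimitive α p) (𝓝[>] 0) (𝓝 0) := by
  have hcont : ContinuousAt (gammaPrimitive α p) 0 := by
    unfold gammaPrimitive
    fun_prop (disch := first | (right; linarith) | (left; norm_num))
  have hzero : gammaPrimitive α p 0 = 0 := by
    simp [gammaPrimitive, zero_rpow (by linarith : p + 1 ≠ 0),
      zero_rpow (by linarith : α - p ≠ 0), zero_rpow hα0.ne']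
  simpa only [hzero] using hcont.tendsto.mono_left nhdsWithin_le_nhds

lemma exists_abs_gammaPrimitive_le {α p : ℝ} (hα0 : 0 < α) :
    ∃ C, ∀ x ∈ Ioo (1 / 2 : ℝ) 1, |gammaPrimitive α p x| ≤ C * (1 - x) ^ (2 - α) := by
  obtain ⟨C₁, hC₁⟩ := exists_abs_gammaNumerator_le α p
  obtain ⟨C₂, hC₂⟩ := exists_abs_le_mul_sub_of_contDiffOn one_half_lt_one.le
    (f := fun x => (α - p - 1) * x ^ (p + 1) + p * x ^ (α - p) - (α - 1) * x)
    (((contDiffOn_const.mul (contDiffOn_rpow_const_Icc _ one_half_pos)).add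
      (contDiffOn_const.mul (contDiffOn_rpow_const_Icc _ one_half_pos))).sub
        (contDiffOn_const.mul contDiffOn_id)) (by simp only [one_rpow, mul_one]; ring)
  refine ⟨C₁ / α + C₂ / |α * (α - 1)|, fun x hx => ?_⟩
  have hx0 : 0 < x := one_half_pos.trans hx.1
  have h1x : 0 < 1 - x := sub_pos.2 hx.2
  have hx' : x ∈ Icc (1 / 2 : ℝ) 1 := Ioo_subset_Icc_self hx
  have hA : |x * gammaNumerator α p x| ≤ C₁ * (1 - x) ^ 2 := by
    rw [abs_mul, abs_of_pos hx0]
    exact (mul_le_of_le_one_left (abs_nonneg _) hx.2.le).trans (hC₁ x hx')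
  have hQ := hC₂ x hx'
  have e₁ : (1 - x) ^ 2 * (1 - x) ^ (-α) = (1 - x) ^ (2 - α) := by
    rw [← rpow_natCast, ← rpow_add h1x]; ring_nf
  have e₂ : (1 - x) * (1 - x) ^ (1 - α) = (1 - x) ^ (2 - α) := by
    rw [show 2 - α = 1 + (1 - α) by ring, rpow_add h1x, rpow_one]
  have hW := rpow_pos_of_pos h1x (-α)
  have hZ := rpow_pos_of_pos h1x (1 - α)
  rw [gammaPrimitive, ← mul_gammaNumerator hx0]
  generalize x * gammaNumerator α p x = A at hA ⊢
  generalize (α - p - 1) * x ^ (p + 1) + p * x ^ (α - p) - (α - 1) * x = Q at hQ ⊢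
  calc |A * (1 - x) ^ (-α) / α + Q * (1 - x) ^ (1 - α) / (α * (α - 1))|
      ≤ |A| * (1 - x) ^ (-α) / α + |Q| * (1 - x) ^ (1 - α) / |α * (α - 1)| := by
        refine (abs_add_le _ _).trans_eq ?_
        rw [abs_div, abs_div, abs_mul, abs_mul, abs_of_pos hW, abs_of_pos hZ, abs_of_pos hα0]
    _ ≤ C₁ * (1 - x) ^ 2 * (1 - x) ^ (-α) / α
        + C₂ * (1 - x) * (1 - x) ^ (1 - α) / |α * (α - 1)| := by
        gcongr
    _ = (C₁ / α + C₂ / |α * (α - 1)|) * (1 - x) ^ (2 - α) := by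
        rw [mul_assoc C₁, e₁, mul_assoc C₂, e₂]; ring

lemma tendsto_gammaPrimitive_one {α p : ℝ} (hα0 : 0 < α) (hα2 : α < 2) :
    Tendsto (gammaPrimitive α p) (𝓝[<] 1) (𝓝 0) := by
  obtain ⟨C, hC⟩ := exists_abs_gammaPrimitive_le (p := p) hα0
  have hbound : Tendsto (fun x : ℝ => C * (1 - x) ^ (2 - α)) (𝓝[<] 1) (𝓝 0) := by
    have hcont : ContinuousAt (fun x : ℝ => C * (1 - x) ^ (2 - α)) 1 := by
      fun_prop (disch := (right; linarith))
    simpa [zero_rpow (by linarith : 2 - α ≠ 0)] using hcont.tendsto.mono_left nhdsWithin_le_nhds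
  refine squeeze_zero_norm' ?_ hbound
  filter_upwards [Ioo_mem_nhdsLT one_half_lt_one] with x hx
  exact hC x hx

theorem gamma_beta_formula (α p : ℝ) (hα0 : 0 < α) (hα2 : α < 2) (hα1 : α ≠ 1)
    (hp1 : -1 < p) (hpα : p < α) :
    (∫ t in Set.Ioo (0 : ℝ) 1,
        (t ^ p - 1) * (1 - t ^ (α - p - 1)) / (1 - t) ^ (1 + α)) =
      (1 / (α * (α - 1))) *
        ((p + 1 - α) * (p + 2 - α) * eulerBeta (p + 1) (2 - α)
          - (1 - α) * (2 - α) * eulerBeta 1 (2 - α)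
          + p * (p - 1) * eulerBeta (α - p) (2 - α)) := by
  have hφ : IntervalIntegrable (gammaIntegrand α p) volume 0 1 :=
    (intervalIntegrable_iff_integrableOn_Ioo_of_le zero_le_one).2
      (integrableOn_gammaIntegrand hα0 hα2 hp1 hpα)
  have hr := intervalIntegrable_gammaRemainder hα2 hp1 hpα
  have hftc := intervalIntegral.integral_eq_sub_of_hasDerivAt_of_tendsto zero_lt_one
    (fun t ht => hasDerivAt_gammaPrimitive hα0.ne' hα1 ht) (hφ.sub hr)
    (tendsto_gammaPrimitive_zero hα0 hp1 hpα) (tendsto_gammaPrimitive_one hα0 hα2)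
  rw [intervalIntegral.integral_sub hφ hr, sub_self, sub_eq_zero] at hftc
  rw [← integral_Ioc_eq_integral_Ioo, ← intervalIntegral.integral_of_le zero_le_one]
  exact hftc.trans (integral_gammaRemainder hα2 hp1 hpα)
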